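/- Let F : [0,∞) × ℝ^n × ℝ^n → ℝ^n be continuous with |F(s,a,b)| ≤ L_f(|a| + |b|) for all s ≥ 0, a, b ∈ ℝ^n, and let Ψ = (û,v̂) ∈ C_γ^+. Then the following are equivalent: (i) for all 0 ≤ t ≤ τ, û(t) = e^{εA(t−τ)} û(τ) − ε∫_t^τ e^{εA(t−s)} F(s, û(s), v̂(s)) ds; (ii) for all t ≥ 0, the integral ∫_t^{+∞} e^{εA(t−s)} F(s, û(s), v̂(s)) ds converges absolutely and û(t) = −ε∫_t^{+∞} e^{εA(t−s)} F(s, û(s), v̂(s)) ds. -/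

import Mathlib

open MeasureTheory Set Filter

noncomputable section

/-- `ℝ^n` with the Euclidean norm. -/
abbrev Vec (n : ℕ) := EuclideanSpace ℝ (Fin n)

/-- Action of an `n × n` real matrix on `ℝ^n`. -/
noncomputable def mApply {n : ℕ} (M : Matrix (Fin n) (Fin n) ℝ) (x : Vec n) : Vec n :=
  Matrix.toEuclideanLin M x

/-- The matrix exponential `e^{tA}`. -/
noncomputable def expM {n : ℕ} (A : Matrix (Fin n) (Fin n) ℝ) (t : ℝ) :
    Matrix (Fin n) (Fin n) ℝ :=
  NormedSpace.exp (t • A)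

/-- The norm `‖u‖_γ^+ = sup_{t ≥ 0} e^{γ t} ‖u t‖` on `C_γ^+`. -/
noncomputable def pNorm {n : ℕ} (γ : ℝ) (u : ℝ → Vec n) : ℝ :=
  sSup ((fun t => Real.exp (γ * t) * ‖u t‖) '' Ici (0:ℝ))

/-- Membership in the Banach space `C_γ^+`: continuity on `[0, ∞)` together with
finiteness of the norm `sup_{t ≥ 0} e^{γ t} ‖u t‖`. -/
def memCpos {n : ℕ} (γ : ℝ) (u : ℝ → Vec n) : Prop :=
  ContinuousOn u (Ici 0) ∧
    BddAbove ((fun t => Real.exp (γ * t) * ‖u t‖) '' Ici (0:ℝ))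

/-- `I_A^ε(Ψ)(t) = ε ∫_t^∞ e^{εA(t−s)} F(s, û(s), v̂(s)) ds`. -/
noncomputable def IA {n : ℕ} (A : Matrix (Fin n) (Fin n) ℝ) (ε : ℝ)
    (F : ℝ → Vec n → Vec n → Vec n) (u v : ℝ → Vec n) (t : ℝ) : Vec n :=
  ε • ∫ s in Ici t, mApply (expM A (ε * (t - s))) (F s (u s) (v s))

/-- `I_B^ε(Ψ)(t) = e^{Bt} v̂₀ + ∫_0^t e^{B(t−s)} G(s, û(s), v̂(s)) ds`. -/
noncomputable def IB {n : ℕ} (B : Matrix (Fin n) (Fin n) ℝ)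
    (G : ℝ → Vec n → Vec n → Vec n) (v₀ : Vec n) (u v : ℝ → Vec n) (t : ℝ) : Vec n :=
  mApply (expM B t) v₀ + ∫ s in (0:ℝ)..t, mApply (expM B (t - s)) (G s (u s) (v s))

/-!
Both directions rest on the semigroup law `e^{εA(t-τ)} e^{εA(τ-s)} = e^{εA(t-s)}` and on the
bound `‖e^{εA(t-s)} x‖ ≤ e^{εγ_A'(s-t)} ‖x‖` for `s ≥ t`. As `û` and `F(s, û, v̂)` decay like
`e^{-γs}` and `εγ_A' < γ`, both the integrand and the boundary term `e^{εA(t-τ)} û(τ)` are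
`O(e^{-(γ - εγ_A')s})`: the integral converges absolutely and letting `τ → ∞` in (i) gives (ii).
Conversely, applying `e^{εA(t-τ)}` to (ii) at `τ` and splitting `∫_t^∞ = ∫_t^τ + ∫_τ^∞` gives (i).
-/

open Real Asymptotics Topology

section VariationOfConstants

variable {E : Type*} [NormedAddCommGroup E]

theorem integrableOn_Ici_of_isBigO_exp_neg {f : ℝ → E} {a b : ℝ} (hb : 0 < b)
    (hf : ContinuousOn f (Ici a)) (ho : f =O[atTop] fun x => exp (-b * x)) :
    IntegrableOn f (Ici a) :=
  (hf.locallyIntegrableOn measurableSet_Ici).integrableOn_of_isBigO_atTop ho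
    ⟨Ioi b, Ioi_mem_atTop b, exp_neg_integrableOn_Ioi b hb⟩

variable [NormedSpace ℝ E]

theorem isBigO_apply_exp_of_norm_le {S : ℝ → E →L[ℝ] E} {κ : ℝ}
    (hS : ∀ r ≤ 0, ∀ x, ‖S r x‖ ≤ exp (-κ * r) * ‖x‖) {w : ℝ → E} {γ C : ℝ}
    (hw : ∀ s ≥ 0, ‖w s‖ ≤ C * exp (-γ * s)) (t : ℝ) :
    (fun s => S (t - s) (w s)) =O[atTop] fun s => exp (-(γ - κ) * s) := by
  refine IsBigO.of_bound (|C| * exp (-κ * t)) ?_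
  filter_upwards [eventually_ge_atTop (max t 0)] with s hs
  calc ‖S (t - s) (w s)‖
      ≤ exp (-κ * (t - s)) * (C * exp (-γ * s)) := by
        grw [hS _ (by linarith [le_max_left t 0]) _, hw s (le_of_max_le_right hs)]
    _ = C * exp (-κ * t) * exp (-(γ - κ) * s) := by
        rw [mul_left_comm, mul_assoc, ← exp_add, ← exp_add]; ring_nf
    _ ≤ |C| * exp (-κ * t) * ‖exp (-(γ - κ) * s)‖ := by
        rw [norm_of_nonneg (exp_nonneg _)]; gcongr; exact le_abs_self C

theorem eq_neg_smul_setIntegral_Ici_of_tendsto {f w : ℝ → E} {x : E} {c t : ℝ}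
    (hf : IntegrableOn f (Ici t)) (hw : Tendsto w atTop (𝓝 0))
    (h : ∀ τ ≥ t, x = w τ - c • ∫ s in t..τ, f s) :
    x = -(c • ∫ s in Ici t, f s) := by
  have hlim : Tendsto (fun τ => w τ - c • ∫ s in t..τ, f s) atTop
      (𝓝 (0 - c • ∫ s in Ici t, f s)) := by
    rw [integral_Ici_eq_integral_Ioi]
    exact hw.sub <| (intervalIntegral_tendsto_integral_Ioi t
      (hf.mono_set Ioi_subset_Ici_self) tendsto_id).const_smul c
  rw [← zero_sub]
  exact tendsto_nhds_unique tendsto_const_nhds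
    (hlim.congr' ((eventually_ge_atTop t).mono fun τ hτ => (h τ hτ).symm))

theorem eq_sub_smul_intervalIntegral_of_eq_neg_smul_setIntegral_Ici [CompleteSpace E]
    {S : ℝ → E →L[ℝ] E} (hS : ∀ a b, S (a + b) = (S a).comp (S b)) {u g : ℝ → E} {c t τ : ℝ}
    (htτ : t ≤ τ)
    (ht : IntegrableOn (fun s => S (t - s) (g s)) (Ici t))
    (hτ : IntegrableOn (fun s => S (τ - s) (g s)) (Ici τ))
    (hut : u t = -(c • ∫ s in Ici t, S (t - s) (g s)))
    (huτ : u τ = -(c • ∫ s in Ici τ, S (τ - s) (g s))) :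
    u t = S (t - τ) (u τ) - c • ∫ s in t..τ, S (t - s) (g s) := by
  have hpull : S (t - τ) (∫ s in Ici τ, S (τ - s) (g s)) = ∫ s in Ici τ, S (t - s) (g s) := by
    rw [← (S (t - τ)).integral_comp_comm hτ]
    simp only [← ContinuousLinearMap.comp_apply, ← hS, sub_add_sub_cancel]
  have hsplit : ∫ s in Ici t, S (t - s) (g s) =
      (∫ s in t..τ, S (t - s) (g s)) + ∫ s in Ici τ, S (t - s) (g s) := by
    rw [integral_Ici_eq_integral_Ioi, integral_Ici_eq_integral_Ioi,
      intervalIntegral.integral_of_le htτ, ← Ioc_union_Ioi_eq_Ioi htτ,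
      setIntegral_union (Ioc_disjoint_Ioi le_rfl) measurableSet_Ioi
        (ht.mono_set fun s hs => hs.1.le) (ht.mono_set fun s hs => htτ.trans hs.le)]
  rw [hut, huτ, map_neg, map_smul, hpull, hsplit, smul_add]
  abel

end VariationOfConstants

theorem Matrix.continuous_toEuclideanCLM {𝕜 ι : Type*} [RCLike 𝕜] [Fintype ι] [DecidableEq ι] :
    Continuous (Matrix.toEuclideanCLM (𝕜 := 𝕜) (n := ι)) := by
  open scoped Matrix.Norms.L2Operator in
  exact (AddMonoidHomClass.isometry_of_norm _ fun a => (Matrix.cstar_norm_def a).symm).continuous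

theorem continuous_expM {n : ℕ} (A : Matrix (Fin n) (Fin n) ℝ) : Continuous (expM A) := by
  open scoped Matrix.Norms.Operator in
  exact NormedSpace.exp_continuous.comp (continuous_id.smul continuous_const)

theorem expM_add {n : ℕ} (A : Matrix (Fin n) (Fin n) ℝ) (a b : ℝ) :
    expM A (a + b) = expM A a * expM A b := by
  rw [expM, add_smul, Matrix.exp_add_of_commute _ _ (((Commute.refl A).smul_left a).smul_right b)]
  rfl

def expCLM {n : ℕ} (A : Matrix (Fin n) (Fin n) ℝ) (r : ℝ) : Vec n →L[ℝ] Vec n :=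
  Matrix.toEuclideanCLM (𝕜 := ℝ) (expM A r)

theorem expCLM_add {n : ℕ} (A : Matrix (Fin n) (Fin n) ℝ) (a b : ℝ) :
    expCLM A (a + b) = (expCLM A a).comp (expCLM A b) := by
  rw [expCLM, expM_add, map_mul, ContinuousLinearMap.mul_def]
  rfl

theorem continuous_expCLM {n : ℕ} (A : Matrix (Fin n) (Fin n) ℝ) : Continuous (expCLM A) :=
  Matrix.continuous_toEuclideanCLM.comp (continuous_expM A)

theorem memCpos.norm_le {n : ℕ} {γ : ℝ} {u : ℝ → Vec n} (hu : memCpos γ u) :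
    ∃ C, ∀ s ≥ 0, ‖u s‖ ≤ C * exp (-γ * s) := by
  obtain ⟨-, C, hC⟩ := hu
  refine ⟨C, fun s hs => ?_⟩
  rw [neg_mul, exp_neg, ← div_eq_mul_inv, le_div_iff₀ (exp_pos _), mul_comm]
  exact hC (mem_image_of_mem _ hs)

theorem memCpos.exists_norm_apply_le {n : ℕ} {γ Lf : ℝ} {u v : ℝ → Vec n}
    {F : ℝ → Vec n → Vec n → Vec n} (hLf : 0 ≤ Lf)
    (hFgrow : ∀ s ≥ (0:ℝ), ∀ a b : Vec n, ‖F s a b‖ ≤ Lf * (‖a‖ + ‖b‖))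
    (hu : memCpos γ u) (hv : memCpos γ v) :
    ∃ C, ∀ s ≥ 0, ‖F s (u s) (v s)‖ ≤ C * exp (-γ * s) := by
  obtain ⟨Cu, hCu⟩ := hu.norm_le
  obtain ⟨Cv, hCv⟩ := hv.norm_le
  refine ⟨Lf * (Cu + Cv), fun s hs => ?_⟩
  grw [hFgrow s hs, hCu s hs, hCv s hs]
  exact (by ring : _ = _).le

theorem statement14_general
    (n : ℕ)
    (A : Matrix (Fin n) (Fin n) ℝ) (γA' : ℝ)
    (hA : ∀ t ≤ (0:ℝ), ∀ x : Vec n, ‖mApply (expM A t) x‖ ≤ Real.exp (-γA' * t) * ‖x‖)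
    (γ ε : ℝ) (hε : 0 < ε) (hεγ : ε * γA' < γ)
    (F : ℝ → Vec n → Vec n → Vec n) (Lf : ℝ) (hLf : 0 < Lf)
    (hFcont : Continuous fun p : ℝ × Vec n × Vec n => F p.1 p.2.1 p.2.2)
    (hFgrow : ∀ s ≥ (0:ℝ), ∀ a b : Vec n, ‖F s a b‖ ≤ Lf * (‖a‖ + ‖b‖))
    (u v : ℝ → Vec n) (hu : memCpos γ u) (hv : memCpos γ v) :
    (∀ t τ : ℝ, 0 ≤ t → t ≤ τ →
        u t = mApply (expM A (ε * (t - τ))) (u τ) -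
          ε • ∫ s in t..τ, mApply (expM A (ε * (t - s))) (F s (u s) (v s))) ↔
      (∀ t ≥ (0:ℝ),
        IntegrableOn (fun s => mApply (expM A (ε * (t - s))) (F s (u s) (v s)))
            (Ici t) volume ∧
          u t = -(ε • ∫ s in Ici t,
            mApply (expM A (ε * (t - s))) (F s (u s) (v s)))) := by
  set S : ℝ → Vec n →L[ℝ] Vec n := fun r => expCLM A (ε * r)
  set g : ℝ → Vec n := fun s => F s (u s) (v s)
  -- `mApply (expM A r)` is definitionally `expCLM A r`
  change (∀ t τ : ℝ, 0 ≤ t → t ≤ τ → u t = S (t - τ) (u τ) - ε • ∫ s in t..τ, S (t - s) (g s)) ↔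
    ∀ t ≥ (0:ℝ), IntegrableOn (fun s => S (t - s) (g s)) (Ici t) ∧
      u t = -(ε • ∫ s in Ici t, S (t - s) (g s))
  have hS_le : ∀ r ≤ 0, ∀ x, ‖S r x‖ ≤ exp (-(ε * γA') * r) * ‖x‖ := fun r hr x => by
    rw [show -(ε * γA') * r = -γA' * (ε * r) by ring]
    exact hA (ε * r) (mul_nonpos_of_nonneg_of_nonpos hε.le hr) x
  obtain ⟨Cu, hCu⟩ := hu.norm_le
  obtain ⟨Cg, hCg⟩ := hu.exists_norm_apply_le hLf.le hFgrow hv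
  have hg_cont : ContinuousOn g (Ici 0) :=
    hFcont.comp_continuousOn (continuousOn_id.prodMk (hu.1.prodMk hv.1))
  have hdecay : 0 < γ - ε * γA' := by linarith
  have hint : ∀ t ≥ (0:ℝ), IntegrableOn (fun s => S (t - s) (g s)) (Ici t) := fun t ht =>
    integrableOn_Ici_of_isBigO_exp_neg hdecay
      ((((continuous_expCLM A).comp (continuous_const_mul ε)).comp
        (continuous_sub_left t)).continuousOn.clm_apply (hg_cont.mono (Ici_subset_Ici.2 ht)))
      (isBigO_apply_exp_of_norm_le hS_le hCg t)
  constructor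
  · intro h t ht
    refine ⟨hint t ht, eq_neg_smul_setIntegral_Ici_of_tendsto (hint t ht) ?_ (h t · ht)⟩
    exact (isBigO_apply_exp_of_norm_le hS_le hCu t).trans_tendsto
      (tendsto_exp_atBot.comp (tendsto_id.const_mul_atTop_of_neg (neg_lt_zero.2 hdecay)))
  · intro h t τ ht htτ
    have hτ := ht.trans htτ
    exact eq_sub_smul_intervalIntegral_of_eq_neg_smul_setIntegral_Ici
      (fun a b => by simp only [S, mul_add, expCLM_add]) htτ
      (h t ht).1 (h τ hτ).1 (h t ht).2 (h τ hτ).2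

/-- for `Ψ = (û, v̂) ∈ C_γ^+`, the backward variation-of-constants
identity on intervals `[t, τ] ⊆ [0, ∞)` is equivalent to the improper-integral
representation `û(t) = −ε ∫_t^∞ e^{εA(t−s)} F(s, û(s), v̂(s)) ds` (with absolute
convergence). -/
theorem statement14
    (n : ℕ) (hn : 0 < n)
    (A : Matrix (Fin n) (Fin n) ℝ) (γA' : ℝ) (hγA' : 0 < γA')
    (hA : ∀ t ≤ (0:ℝ), ∀ x : Vec n, ‖mApply (expM A t) x‖ ≤ Real.exp (-γA' * t) * ‖x‖)
    (γ ε : ℝ) (hγ : 0 < γ) (hε : 0 < ε) (hεγ : ε * γA' < γ)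
    (F : ℝ → Vec n → Vec n → Vec n) (Lf : ℝ) (hLf : 0 < Lf)
    (hFcont : Continuous fun p : ℝ × Vec n × Vec n => F p.1 p.2.1 p.2.2)
    (hFgrow : ∀ s ≥ (0:ℝ), ∀ a b : Vec n, ‖F s a b‖ ≤ Lf * (‖a‖ + ‖b‖))
    (u v : ℝ → Vec n) (hu : memCpos γ u) (hv : memCpos γ v) :
    (∀ t τ : ℝ, 0 ≤ t → t ≤ τ →
        u t = mApply (expM A (ε * (t - τ))) (u τ) -
          ε • ∫ s in t..τ, mApply (expM A (ε * (t - s))) (F s (u s) (v s))) ↔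
      (∀ t ≥ (0:ℝ),
        IntegrableOn (fun s => mApply (expM A (ε * (t - s))) (F s (u s) (v s)))
            (Ici t) volume ∧
          u t = -(ε • ∫ s in Ici t,
            mApply (expM A (ε * (t - s))) (F s (u s) (v s)))) :=
  statement14_general n A γA' hA γ ε hε hεγ F Lf hLf hFcont hFgrow u v hu hv
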